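/- Consider the 2×2 exchange matrix B₀ = [[0, −1], [2, 0]] with initial extended exchange matrix having C-matrix the 2×2 identity. Then there are exactly two maximal green sequences: (1,2) of length 2 and (2,1,2,1) of length 4, and both terminate at the extended exchange matrix whose C-part is −I₂. -/
import Mathlib


open Matrix

/-- Fomin–Zelevinsky mutation of a `4 × 2` integer extended exchange matrix
(rows `0,1` form the exchange part `B`, rows `2,3` the coefficient part `C`)
in the direction of column `l`. -/
def extMutation (M : Matrix (Fin 4) (Fin 2) ℤ) (l : Fin 2) : Matrix (Fin 4) (Fin 2) ℤ :=
  fun i j =>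
    if i.val = l.val ∨ j = l then -M i j
    else if 0 < M i l * M (Fin.castLE (by omega) l) j then
      M i j + M i l * |M (Fin.castLE (by omega) l) j|
    else M i j

/-- The mutation `μₗ` is green at `M`: the `l`-th column of the `C`-part is nonnegative. -/
def IsGreen (M : Matrix (Fin 4) (Fin 2) ℤ) (l : Fin 2) : Prop :=
  ∀ r : Fin 2, 0 ≤ M ⟨r.val + 2, by omega⟩ l

/-- The `C`-part of `M` has no positive entries. -/
def CNonPos (M : Matrix (Fin 4) (Fin 2) ℤ) : Prop :=
  ∀ r j : Fin 2, M ⟨r.val + 2, by omega⟩ j ≤ 0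

/-- `ks` is a maximal green sequence starting at `M`: each mutation in the sequence is
green, and the final matrix has no positive entries in its `C`-part. -/
def IsMGS (M : Matrix (Fin 4) (Fin 2) ℤ) : List (Fin 2) → Prop
  | [] => CNonPos M
  | k :: ks => IsGreen M k ∧ IsMGS (extMutation M k) ks

/-- Result of applying a sequence of mutations. -/
def applySeq (M : Matrix (Fin 4) (Fin 2) ℤ) (ks : List (Fin 2)) :
    Matrix (Fin 4) (Fin 2) ℤ :=
  ks.foldl extMutation M

section Aux

private def SF : Matrix (Fin 4) (Fin 2) ℤ := !![0, -1; 2, 0; -1, 0; 0, -1]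
private def SA : Matrix (Fin 4) (Fin 2) ℤ := !![0, 1; -2, 0; -1, 0; 0, 1]
private def SB1 : Matrix (Fin 4) (Fin 2) ℤ := !![0, 1; -2, 0; 1, 0; 2, -1]
private def SB2 : Matrix (Fin 4) (Fin 2) ℤ := !![0, -1; 2, 0; -1, 1; -2, 1]
private def SB3 : Matrix (Fin 4) (Fin 2) ℤ := !![0, 1; -2, 0; 1, -1; 0, -1]

private lemma mgsF : ∀ ks, IsMGS SF ks ↔ ks = [] := by
  intro ks
  cases ks with
  | nil => simp only [IsMGS]; unfold CNonPos; decide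
  | cons k ks =>
    simp only [IsMGS, List.cons_ne_nil, iff_false]
    rintro ⟨hg, -⟩
    obtain rfl | rfl : k = 0 ∨ k = 1 := by omega
    · exact absurd hg (by unfold IsGreen; decide)
    · exact absurd hg (by unfold IsGreen; decide)

private lemma mgs_step (M N : Matrix (Fin 4) (Fin 2) ℤ) (l : Fin 2)
    (hN : extMutation M l = N) (ks : List (Fin 2)) :
    IsMGS M (l :: ks) ↔ IsGreen M l ∧ IsMGS N ks := by
  simp [IsMGS, hN]

private lemma mgsB3 : ∀ ks, IsMGS SB3 ks ↔ ks = [0] := by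
  intro ks
  cases ks with
  | nil => simp only [IsMGS]; unfold CNonPos; decide
  | cons k ks =>
    obtain rfl | rfl : k = 0 ∨ k = 1 := by omega
    · rw [mgs_step SB3 SF 0 (by decide)]
      simp [mgsF, (by unfold IsGreen; decide : IsGreen SB3 0)]
    · exact ⟨fun h => absurd h.1 (by unfold IsGreen; decide), fun h => by simp at h⟩

private lemma mgsB2 : ∀ ks, IsMGS SB2 ks ↔ ks = [1, 0] := by
  intro ks
  cases ks with
  | nil => simp only [IsMGS]; unfold CNonPos; decide
  | cons k ks =>
    obtain rfl | rfl : k = 0 ∨ k = 1 := by omega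
    · exact ⟨fun h => absurd h.1 (by unfold IsGreen; decide), fun h => by simp at h⟩
    · rw [mgs_step SB2 SB3 1 (by decide)]
      simp [mgsB3, (by unfold IsGreen; decide : IsGreen SB2 1)]

private lemma mgsB1 : ∀ ks, IsMGS SB1 ks ↔ ks = [0, 1, 0] := by
  intro ks
  cases ks with
  | nil => simp only [IsMGS]; unfold CNonPos; decide
  | cons k ks =>
    obtain rfl | rfl : k = 0 ∨ k = 1 := by omega
    · rw [mgs_step SB1 SB2 0 (by decide)]
      simp [mgsB2, (by unfold IsGreen; decide : IsGreen SB1 0)]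
    · exact ⟨fun h => absurd h.1 (by unfold IsGreen; decide), fun h => by simp at h⟩

private lemma mgsA : ∀ ks, IsMGS SA ks ↔ ks = [1] := by
  intro ks
  cases ks with
  | nil => simp only [IsMGS]; unfold CNonPos; decide
  | cons k ks =>
    obtain rfl | rfl : k = 0 ∨ k = 1 := by omega
    · exact ⟨fun h => absurd h.1 (by unfold IsGreen; decide), fun h => by simp at h⟩
    · rw [mgs_step SA SF 1 (by decide)]
      simp [mgsF, (by unfold IsGreen; decide : IsGreen SA 1)]

private lemma mgsM0 :
    ∀ ks, IsMGS !![0, -1; 2, 0; 1, 0; 0, 1] ks ↔ ks = [0, 1] ∨ ks = [1, 0, 1, 0] := by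
  intro ks
  cases ks with
  | nil => simp only [IsMGS]; unfold CNonPos; decide
  | cons k ks =>
    obtain rfl | rfl : k = 0 ∨ k = 1 := by omega
    · rw [mgs_step _ SA 0 (by decide)]
      simp [mgsA, (by unfold IsGreen; decide : IsGreen !![0, -1; 2, 0; 1, 0; 0, 1] (0 : Fin 2))]
    · rw [mgs_step _ SB1 1 (by decide)]
      simp [mgsB1, (by unfold IsGreen; decide : IsGreen !![0, -1; 2, 0; 1, 0; 0, 1] (1 : Fin 2))]

end Aux

/-- For `B₀ = [[0,-1],[2,0]]` with initial `C`-matrix `I₂` there are exactly two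
maximal green sequences, `(1,2)` and `(2,1,2,1)` (with `0`-indexed mutation
directions `[0,1]` and `[1,0,1,0]`), and both terminate at a matrix whose `C`-part
is `-I₂`. -/
theorem c2_maximal_green_sequences :
    let M₀ : Matrix (Fin 4) (Fin 2) ℤ := !![0, -1; 2, 0; 1, 0; 0, 1]
    (∀ ks : List (Fin 2), IsMGS M₀ ks ↔ ks = [0, 1] ∨ ks = [1, 0, 1, 0]) ∧
      ∀ ks : List (Fin 2), IsMGS M₀ ks →
        ∀ r j : Fin 2, applySeq M₀ ks ⟨r.val + 2, by omega⟩ j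
          = -(1 : Matrix (Fin 2) (Fin 2) ℤ) r j := by
  exact ⟨mgsM0, fun ks hks => by
    rcases (mgsM0 ks).1 hks with rfl | rfl <;> decide⟩
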